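/- arXiv:2604.26069 — 2 statements merged into one kernel-verified Lean document; each statement's English description precedes it below -/
import Mathlib

section
/- Fix γ > 0 and define σ_{δ,m} = m·(1 − δ^{γ/m})·δ^{(γ/2)(1 − 1/m)} / (−log δ) for δ ∈ (0,1) and integers m ≥ 2. Then σ_{δ,m} is decreasing in m and increasing in δ, and γ·δ^{γ/2} < σ_{δ,m} < γ for all δ ∈ (0,1) and m ≥ 2; moreover, for fixed δ, σ_{δ,m} → γ·δ^{γ/2} as m → ∞, and for fixed m, σ_{δ,m} → γ as δ → 1⁻. -/
open MeasureTheory ProbabilityTheory Filter Set Asymptotics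
open scoped ENNReal NNReal Topology Classical

noncomputable section

namespace GeomRecords

variable {Ω : Type*} [MeasurableSpace Ω]

/-- `X` has a `Pareto(γ, D)` distribution under `μ`: its survival function is
`P(X > x) = (x/D)^{-γ}` for `x > D`. -/
def IsPareto (μ : Measure Ω) (X : Ω → ℝ) (γ D : ℝ) : Prop :=
  ∀ x : ℝ, D < x → μ {ω | x < X ω} = ENNReal.ofReal ((x / D) ^ (-γ))

/-- `X` has a Pareto-type distribution: its survival function is
`P(X > x) = x^{-γ} L x` for `x > D`. -/
def IsParetoType (μ : Measure Ω) (X : Ω → ℝ) (γ D : ℝ) (L : ℝ → ℝ) : Prop :=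
  ∀ x : ℝ, D < x → μ {ω | x < X ω} = ENNReal.ofReal (x ^ (-γ) * L x)

/-- `L` is slowly varying at infinity. -/
def SlowlyVarying (L : ℝ → ℝ) : Prop :=
  ∀ t : ℝ, 0 < t → Tendsto (fun x => L (t * x) / L x) atTop (𝓝 1)

/-- Time of the `(i+1)`-th record of the sequence `X` (`0`-based indexing of records;
the first observation is a record). -/
def recTime (X : ℕ → Ω → ℝ) (ω : Ω) : ℕ → ℕ
  | 0 => 0
  | i + 1 => sInf {j | recTime X ω i < j ∧ X (recTime X ω i) ω < X j ω}

/-- Value of the `(i+1)`-th record (`0`-based). -/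
def recVal (X : ℕ → Ω → ℝ) (ω : Ω) (i : ℕ) : ℝ := X (recTime X ω i) ω

/-- Index (`0`-based) of the first record exceeding the threshold `A`. -/
def recStart (X : ℕ → Ω → ℝ) (A : ℝ) (ω : Ω) : ℕ := sInf {i | A < recVal X ω i}

/-- Sample record values: `R 1, R 2, …` are the successive records once an observation
exceeding the threshold `A` has appeared in the sequence; by convention `R 0 = A`. -/
def R (X : ℕ → Ω → ℝ) (A : ℝ) (i : ℕ) (ω : Ω) : ℝ :=
  if i = 0 then A else recVal X ω (recStart X A ω + (i - 1))

/-- Times of the geometric near-records, for the transformed sequence `g ∘ X`,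
associated with the `i`-th sample record (`i ≥ 1`): the times `j` strictly between the
record times of the `i`-th and `(i+1)`-th sample records with `g (X j) > δ · g (R i)`. -/
def nearRecTimesT (g : ℝ → ℝ) (X : ℕ → Ω → ℝ) (δ A : ℝ) (i : ℕ) (ω : Ω) : Finset ℕ :=
  (Finset.Ioo (recTime X ω (recStart X A ω + (i - 1)))
      (recTime X ω (recStart X A ω + i))).filter
    fun j => δ * g (R X A i ω) < g (X j ω)

/-- Times of the geometric near-records associated with the `i`-th sample record. -/
def nearRecTimes (X : ℕ → Ω → ℝ) (δ A : ℝ) (i : ℕ) (ω : Ω) : Finset ℕ :=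
  nearRecTimesT id X δ A i ω

/-- `S i`: number of geometric near-records associated with the `i`-th sample record. -/
def S (X : ℕ → Ω → ℝ) (δ A : ℝ) (i : ℕ) (ω : Ω) : ℕ := (nearRecTimes X δ A i ω).card

/-- Time of the `j`-th (`1`-based) geometric near-record associated with `R i`. -/
def nearRecTime (X : ℕ → Ω → ℝ) (δ A : ℝ) (i j : ℕ) (ω : Ω) : ℕ :=
  ((nearRecTimes X δ A i ω).sort (· ≤ ·)).getD (j - 1) 0

/-- `a = δ^{-1/m}`. -/
def base (δ : ℝ) (m : ℕ) : ℝ := δ ^ (-(1 : ℝ) / m)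

/-- Discretization index of a value `x` relative to the level `r`: the `v` such that
`x ∈ (a^v δ r, a^{v+1} δ r]`, i.e. `⌈log_a (x / (δ r))⌉ - 1`, with `a = δ^{-1/m}`. -/
def discIdx (δ : ℝ) (m : ℕ) (r x : ℝ) : ℕ :=
  (⌈Real.logb (base δ m) (x / (δ * r))⌉ - 1).toNat

/-- `V i j`: discretization index of the `j`-th geometric near-record associated with `R i`. -/
def V (X : ℕ → Ω → ℝ) (δ A : ℝ) (m : ℕ) (i j : ℕ) (ω : Ω) : ℕ :=
  discIdx δ m (R X A i ω) (X (nearRecTime X δ A i j ω) ω)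

/-- `K i = ⌈log_a (R i / R (i-1))⌉ - 1`, with `a = δ^{-1/m}`. -/
def K (X : ℕ → Ω → ℝ) (δ A : ℝ) (m : ℕ) (i : ℕ) (ω : Ω) : ℕ :=
  (⌈Real.logb (base δ m) (R X A i ω / R X A (i - 1) ω)⌉ - 1).toNat

/-- The estimator `β̂` computed from an arbitrary sample `(K, S, V)`. -/
def betaHatOf (Kf Sf : ℕ → Ω → ℕ) (Vf : ℕ → ℕ → Ω → ℕ) (m n : ℕ) (ω : Ω) : ℝ :=
  ((m * n : ℝ) + ∑ i ∈ Finset.Icc 1 n, ∑ j ∈ Finset.Icc 1 (Sf i ω), (Vf i j ω : ℝ)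
      + ∑ i ∈ Finset.Icc 1 n, (Kf i ω : ℝ)) /
  (((m + 1 : ℕ) * n : ℝ) + ∑ i ∈ Finset.Icc 1 n, ∑ j ∈ Finset.Icc 1 (Sf i ω), (Vf i j ω : ℝ)
      + ∑ i ∈ Finset.Icc 1 n, (Kf i ω : ℝ) + ∑ i ∈ Finset.Icc 1 n, (Sf i ω : ℝ))

/-- The estimator `γ̂ = m log_δ β̂` computed from an arbitrary sample `(K, S, V)`. -/
def gammaHatOf (δ : ℝ) (Kf Sf : ℕ → Ω → ℕ) (Vf : ℕ → ℕ → Ω → ℕ) (m n : ℕ) (ω : Ω) : ℝ :=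
  m * Real.logb δ (betaHatOf Kf Sf Vf m n ω)

/-- The maximum-likelihood estimator `γ̂^A_{δ,m,n}` based on the sample `T_n = (K, S, V)`. -/
def gammaHat (X : ℕ → Ω → ℝ) (δ A : ℝ) (m n : ℕ) (ω : Ω) : ℝ :=
  gammaHatOf δ (fun i => K X δ A m i) (fun i => S X δ A i) (fun i j => V X δ A m i j) m n ω

/-- `ν` is the geometric distribution `Geom*(p)` on `{0,1,2,…}` with success probability `p`. -/
def IsGeomStar (ν : Measure ℕ) (p : ℝ) : Prop :=
  ∀ k : ℕ, ν {k} = ENNReal.ofReal ((1 - p) ^ k * p)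

/-- `ν` is the geometric distribution with success probability `p` truncated to `{0,…,m-1}`. -/
def IsTruncGeom (ν : Measure ℕ) (p : ℝ) (m : ℕ) : Prop :=
  ∀ v : ℕ, ν {v} =
    if v < m then ENNReal.ofReal ((1 - p) ^ v * p / (1 - (1 - p) ^ m)) else 0

/-- The asymptotic standard deviation `σ_{δ,m}`. -/
def sigma (γ δ : ℝ) (m : ℕ) : ℝ :=
  m * (1 - δ ^ (γ / m)) * δ ^ ((γ / 2) * (1 - 1 / m)) / (-Real.log δ)

/-- `φ(x) = F̄(x)^{-1/γ} = x · L(x)^{-1/γ}`. -/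
def phi (γ : ℝ) (L : ℝ → ℝ) (x : ℝ) : ℝ := x * L x ^ (-(1 : ℝ) / γ)

/-- The starred record values `R*_i = φ(R_i)`. -/
def Rstar (X : ℕ → Ω → ℝ) (γ A : ℝ) (L : ℝ → ℝ) (i : ℕ) (ω : Ω) : ℝ :=
  phi γ L (R X A i ω)

/-- `S*_i`: number of geometric near-records associated with `R*_i` in the starred sequence. -/
def Sstar (X : ℕ → Ω → ℝ) (γ δ A : ℝ) (L : ℝ → ℝ) (i : ℕ) (ω : Ω) : ℕ :=
  (nearRecTimesT (phi γ L) X δ A i ω).card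

/-- Time of the `j`-th (`1`-based) geometric near-record associated with `R*_i`. -/
def nearRecTimeStar (X : ℕ → Ω → ℝ) (γ δ A : ℝ) (L : ℝ → ℝ) (i j : ℕ) (ω : Ω) : ℕ :=
  ((nearRecTimesT (phi γ L) X δ A i ω).sort (· ≤ ·)).getD (j - 1) 0

/-- `V*_i^j`: discretization index of the `j`-th geometric near-record associated with `R*_i`. -/
def Vstar (X : ℕ → Ω → ℝ) (γ δ A : ℝ) (L : ℝ → ℝ) (m : ℕ) (i j : ℕ) (ω : Ω) : ℕ :=
  discIdx δ m (Rstar X γ A L i ω) (phi γ L (X (nearRecTimeStar X γ δ A L i j ω) ω))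

/-- `K*_i = ⌈log_a (R*_i / R*_{i-1})⌉ - 1`. -/
def Kstar (X : ℕ → Ω → ℝ) (γ δ A : ℝ) (L : ℝ → ℝ) (m : ℕ) (i : ℕ) (ω : Ω) : ℕ :=
  (⌈Real.logb (base δ m) (Rstar X γ A L i ω / Rstar X γ A L (i - 1) ω)⌉ - 1).toNat

/-- `I = inf {i ≥ 1 : R*_i > δ⁻¹}`. -/
def Istar (X : ℕ → Ω → ℝ) (γ δ A : ℝ) (L : ℝ → ℝ) (ω : Ω) : ℕ :=
  sInf {i : ℕ | 1 ≤ i ∧ δ⁻¹ < Rstar X γ A L i ω}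

/-- The σ-algebra `G` generated by the (sample) record values. -/
def recSigma (X : ℕ → Ω → ℝ) (A : ℝ) : MeasurableSpace Ω :=
  MeasurableSpace.comap (fun ω => (fun i => R X A i ω : ℕ → ℝ)) inferInstance

/-- A version of the conditional probability `P(E | G)`, as a function of `ω`. -/
def condProb (μ : Measure Ω) (G : MeasurableSpace Ω) (E : Set Ω) : Ω → ℝ :=
  MeasureTheory.condExp G μ (E.indicator fun _ => (1 : ℝ))

/-- Condition (C): `L` is differentiable on `(D, ∞)` and
`x L'(x) / L(x) = o(1 / (log x (log log x)^{2+η}))` as `x → ∞`. -/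
def CondC (D : ℝ) (L : ℝ → ℝ) (η : ℝ) : Prop :=
  (∀ x : ℝ, D < x → DifferentiableAt ℝ L x) ∧
    (fun x => x * deriv L x / L x) =o[atTop]
      fun x => 1 / (Real.log x * Real.log (Real.log x) ^ (2 + η))

end GeomRecords

/-! With `y = γ (-log δ) / (2m) > 0` one has `δ ^ (γ / m) = e^{-2y}` and `δ ^ (γ / 2) = e^{-my}`, so
`σ_{δ,m} = γ δ^{γ/2} · sinh y / y = γ e^{-(m-1)y} · (1 - e^{-2y}) / (2y)`.
By convexity of `sinh` on `[0, ∞)` and of `exp`, the slope `sinh y / y` increases from `1` and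
`(1 - e^{-x}) / x` decreases from `1`. The first form gives monotonicity in `m` (for fixed `δ`, `y`
decreases in `m`), the lower bound and both limits; in the second, both factors grow as `y`
decreases, which gives monotonicity in `δ` and the upper bound. -/

namespace Real

theorem strictConvexOn_sinh : StrictConvexOn ℝ (Ici 0) sinh :=
  StrictMonoOn.strictConvexOn_of_deriv (convex_Ici 0) continuous_sinh.continuousOn <| by
    rw [Real.deriv_sinh]; exact cosh_strictMonoOn.mono interior_subset

theorem strictMonoOn_sinh_div_self : StrictMonoOn (fun y ↦ sinh y / y) (Ioi 0) := by
  intro x hx y hy hxy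
  have := strictConvexOn_sinh.secant_strict_mono self_mem_Ici (mem_Ici.2 hx.out.le)
    (mem_Ici.2 hy.out.le) hx.out.ne' hy.out.ne' hxy
  simpa using this

theorem strictAntiOn_one_sub_exp_neg_div_self :
    StrictAntiOn (fun x ↦ (1 - exp (-x)) / x) (Ioi 0) := by
  intro x hx y hy hxy
  have := strictConvexOn_exp.secant_strict_mono (a := 0) (x := -y) (y := -x) (mem_univ _)
    (mem_univ _) (mem_univ _) (by simpa using hy.out.ne') (by simpa using hx.out.ne') (by linarith)
  simp only [exp_zero, sub_zero] at this
  rwa [← neg_div_neg_eq, neg_sub, neg_neg, ← neg_div_neg_eq (exp (-x) - 1), neg_sub,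
    neg_neg] at this

theorem one_sub_exp_neg_div_self_lt_one {x : ℝ} (hx : 0 < x) : (1 - exp (-x)) / x < 1 := by
  rw [div_lt_one hx]
  linarith [add_one_lt_exp (neg_ne_zero.2 hx.ne')]

theorem one_sub_exp_neg_div_self_pos {x : ℝ} (hx : 0 < x) : 0 < (1 - exp (-x)) / x := by
  have := exp_lt_one_iff.2 (neg_lt_zero.2 hx)
  exact div_pos (by linarith) hx

theorem one_lt_sinh_div_self {y : ℝ} (hy : 0 < y) : 1 < sinh y / y :=
  (one_lt_div hy).2 (self_lt_sinh_iff.2 hy)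

theorem tendsto_sinh_div_self_nhdsNE_zero : Tendsto (fun y ↦ sinh y / y) (𝓝[≠] 0) (𝓝 1) := by
  have := (hasDerivAt_sinh 0).tendsto_slope
  simp only [cosh_zero] at this
  refine this.congr fun y ↦ ?_
  simp [slope_def_field]

end Real

namespace GeomRecords

section

open Real

def sigmaArg (γ δ : ℝ) (m : ℕ) : ℝ := γ * -log δ / (2 * m)

variable {γ δ : ℝ} {m : ℕ}

theorem rpow_half_eq_exp_sigmaArg (hδ : 0 < δ) (hm : m ≠ 0) :
    δ ^ (γ / 2) = exp (-(m * sigmaArg γ δ m)) := by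
  rw [rpow_def_of_pos hδ, sigmaArg]
  congr 1
  field_simp

theorem sigma_eq_exp_mul_one_sub_exp_div (hδ : 0 < δ) (hδ1 : δ ≠ 1) (hγ : γ ≠ 0) (hm : m ≠ 0) :
    sigma γ δ m = γ * exp (-((m - 1) * sigmaArg γ δ m)) *
      ((1 - exp (-(2 * sigmaArg γ δ m))) / (2 * sigmaArg γ δ m)) := by
  have hlog : log δ ≠ 0 := log_ne_zero_of_pos_of_ne_one hδ hδ1
  have hm' : (m : ℝ) ≠ 0 := Nat.cast_ne_zero.2 hm
  rw [sigma, sigmaArg, rpow_def_of_pos hδ, rpow_def_of_pos hδ]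
  field_simp

theorem sigma_eq_rpow_mul_sinh_div (hδ : 0 < δ) (hδ1 : δ ≠ 1) (hγ : γ ≠ 0) (hm : m ≠ 0) :
    sigma γ δ m = γ * δ ^ (γ / 2) * (sinh (sigmaArg γ δ m) / sigmaArg γ δ m) := by
  rw [sigma_eq_exp_mul_one_sub_exp_div hδ hδ1 hγ hm, rpow_half_eq_exp_sigmaArg hδ hm, sinh_eq]
  set y := sigmaArg γ δ m
  have hy : y ≠ 0 :=
    div_ne_zero (mul_ne_zero hγ (neg_ne_zero.2 (log_ne_zero_of_pos_of_ne_one hδ hδ1))) (by positivity)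
  have : exp (-((m - 1) * y)) * (1 - exp (-(2 * y))) = exp (-(m * y)) * (exp y - exp (-y)) := by
    rw [mul_sub, mul_sub, ← exp_add, ← exp_add, ← exp_add]
    ring_nf
  rw [mul_assoc, mul_assoc, ← mul_div_assoc, this]
  field_simp

theorem sigmaArg_pos (hγ : 0 < γ) (hδ : δ ∈ Ioo 0 1) (hm : m ≠ 0) : 0 < sigmaArg γ δ m := by
  have hm' : (0 : ℝ) < m := by positivity
  exact div_pos (mul_pos hγ (neg_pos.2 (log_neg hδ.1 hδ.2))) (by positivity)

theorem sigmaArg_lt_sigmaArg_of_nat_lt (hγ : 0 < γ) (hδ : δ ∈ Ioo 0 1) {m₁ m₂ : ℕ} (hm₁ : m₁ ≠ 0)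
    (h : m₁ < m₂) : sigmaArg γ δ m₂ < sigmaArg γ δ m₁ := by
  have := log_neg hδ.1 hδ.2
  unfold sigmaArg
  gcongr
  exact mul_pos hγ (neg_pos.2 this)

theorem sigmaArg_lt_sigmaArg_of_lt (hγ : 0 < γ) {δ₁ δ₂ : ℝ} (hδ₁ : 0 < δ₁) (h : δ₁ < δ₂)
    (hm : m ≠ 0) : sigmaArg γ δ₂ m < sigmaArg γ δ₁ m := by
  unfold sigmaArg
  gcongr

theorem tendsto_sigmaArg_atTop (hγ : 0 < γ) (hδ : δ ∈ Ioo 0 1) :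
    Tendsto (fun m : ℕ ↦ sigmaArg γ δ m) atTop (𝓝[≠] 0) := by
  refine tendsto_nhdsWithin_iff.2 ⟨?_, ?_⟩
  · simp only [sigmaArg, ← div_div]
    exact tendsto_const_div_atTop_nhds_zero_nat _
  · filter_upwards [eventually_ne_atTop 0] with m hm using (sigmaArg_pos hγ hδ hm).ne'

theorem tendsto_sigmaArg_nhdsLT_one (hγ : 0 < γ) (hm : m ≠ 0) :
    Tendsto (fun δ ↦ sigmaArg γ δ m) (𝓝[<] 1) (𝓝[≠] 0) := by
  refine tendsto_nhdsWithin_iff.2 ⟨?_, ?_⟩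
  · have : ContinuousAt (fun δ ↦ sigmaArg γ δ m) 1 :=
      ((continuousAt_log one_ne_zero).neg.const_mul γ).div_const _
    simpa [sigmaArg] using this.tendsto.mono_left nhdsWithin_le_nhds
  · filter_upwards [Ioo_mem_nhdsLT zero_lt_one] with δ hδ using (sigmaArg_pos hγ hδ hm).ne'

theorem sigma_lt_sigma_of_nat_lt (hγ : 0 < γ) (hδ : δ ∈ Ioo 0 1) {m₁ m₂ : ℕ} (hm₁ : m₁ ≠ 0)
    (h : m₁ < m₂) : sigma γ δ m₂ < sigma γ δ m₁ := by
  have hm₂ : m₂ ≠ 0 := by omega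
  rw [sigma_eq_rpow_mul_sinh_div hδ.1 hδ.2.ne hγ.ne' hm₁,
    sigma_eq_rpow_mul_sinh_div hδ.1 hδ.2.ne hγ.ne' hm₂]
  gcongr ?_ * ?_
  · exact mul_pos hγ (rpow_pos_of_pos hδ.1 _)
  exact strictMonoOn_sinh_div_self (sigmaArg_pos hγ hδ hm₂) (sigmaArg_pos hγ hδ hm₁)
    (sigmaArg_lt_sigmaArg_of_nat_lt hγ hδ hm₁ h)

theorem sigma_lt_sigma_of_lt (hγ : 0 < γ) {δ₁ δ₂ : ℝ} (hδ₁ : δ₁ ∈ Ioo 0 1) (hδ₂ : δ₂ ∈ Ioo 0 1)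
    (h : δ₁ < δ₂) (hm : m ≠ 0) : sigma γ δ₁ m < sigma γ δ₂ m := by
  rw [sigma_eq_exp_mul_one_sub_exp_div hδ₁.1 hδ₁.2.ne hγ.ne' hm,
    sigma_eq_exp_mul_one_sub_exp_div hδ₂.1 hδ₂.2.ne hγ.ne' hm, mul_assoc, mul_assoc]
  have hy₂ := sigmaArg_pos hγ hδ₂ hm
  have hy : sigmaArg γ δ₂ m < sigmaArg γ δ₁ m := sigmaArg_lt_sigmaArg_of_lt hγ hδ₁.1 h hm
  have hm' : (0 : ℝ) ≤ m - 1 := by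
    rw [sub_nonneg, Nat.one_le_cast]
    omega
  refine mul_lt_mul_of_pos_left (mul_lt_mul' ?_ ?_ ?_ (exp_pos _)) hγ
  · gcongr
  · exact strictAntiOn_one_sub_exp_neg_div_self (mem_Ioi.2 (by linarith)) (mem_Ioi.2 (by linarith))
      (by linarith)
  · exact (one_sub_exp_neg_div_self_pos (by linarith)).le

theorem mul_rpow_half_lt_sigma (hγ : 0 < γ) (hδ : δ ∈ Ioo 0 1) (hm : m ≠ 0) :
    γ * δ ^ (γ / 2) < sigma γ δ m := by
  rw [sigma_eq_rpow_mul_sinh_div hδ.1 hδ.2.ne hγ.ne' hm]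
  exact lt_mul_of_one_lt_right (mul_pos hγ (rpow_pos_of_pos hδ.1 _))
    (one_lt_sinh_div_self (sigmaArg_pos hγ hδ hm))

theorem sigma_lt (hγ : 0 < γ) (hδ : δ ∈ Ioo 0 1) (hm : m ≠ 0) : sigma γ δ m < γ := by
  rw [sigma_eq_exp_mul_one_sub_exp_div hδ.1 hδ.2.ne hγ.ne' hm, mul_assoc]
  have hy := sigmaArg_pos hγ hδ hm
  have hm' : (0 : ℝ) ≤ m - 1 := by
    rw [sub_nonneg, Nat.one_le_cast]
    omega
  refine mul_lt_of_lt_one_right hγ (mul_lt_one_of_nonneg_of_lt_one_right ?_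
    (one_sub_exp_neg_div_self_pos (by positivity)).le ?_)
  · exact exp_le_one_iff.2 (by nlinarith)
  · exact one_sub_exp_neg_div_self_lt_one (by positivity)

theorem tendsto_sigma_atTop (hγ : 0 < γ) (hδ : δ ∈ Ioo 0 1) :
    Tendsto (fun m : ℕ ↦ sigma γ δ m) atTop (𝓝 (γ * δ ^ (γ / 2))) := by
  have := (tendsto_sinh_div_self_nhdsNE_zero.comp (tendsto_sigmaArg_atTop hγ hδ)).const_mul
    (γ * δ ^ (γ / 2))
  rw [mul_one] at this
  refine this.congr' ?_
  filter_upwards [eventually_ne_atTop 0] with m hm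
  exact (sigma_eq_rpow_mul_sinh_div hδ.1 hδ.2.ne hγ.ne' hm).symm

theorem tendsto_sigma_nhdsLT_one (hγ : 0 < γ) (hm : m ≠ 0) :
    Tendsto (fun δ ↦ sigma γ δ m) (𝓝[<] 1) (𝓝 γ) := by
  have hpow : Tendsto (fun δ : ℝ ↦ δ ^ (γ / 2)) (𝓝[<] 1) (𝓝 1) := by
    simpa using ((continuousAt_rpow_const 1 (γ / 2) (Or.inl one_ne_zero)).tendsto).mono_left
      nhdsWithin_le_nhds
  have := (hpow.const_mul γ).mul
    (tendsto_sinh_div_self_nhdsNE_zero.comp (tendsto_sigmaArg_nhdsLT_one hγ hm))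
  rw [mul_one, mul_one] at this
  refine this.congr' ?_
  filter_upwards [Ioo_mem_nhdsLT zero_lt_one] with δ hδ
  exact (sigma_eq_rpow_mul_sinh_div hδ.1 hδ.2.ne hγ.ne' hm).symm

end

/-- Monotonicity, bounds and limits of the asymptotic standard deviation
`σ_{δ,m}`. -/
theorem sigma_monotone_bounds_limits (γ : ℝ) (hγ : 0 < γ) :
    (∀ δ : ℝ, δ ∈ Set.Ioo (0 : ℝ) 1 → ∀ m₁ m₂ : ℕ, 2 ≤ m₁ → m₁ < m₂ →
      sigma γ δ m₂ < sigma γ δ m₁) ∧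
    (∀ δ₁ δ₂ : ℝ, δ₁ ∈ Set.Ioo (0 : ℝ) 1 → δ₂ ∈ Set.Ioo (0 : ℝ) 1 → δ₁ < δ₂ →
      ∀ m : ℕ, 2 ≤ m → sigma γ δ₁ m < sigma γ δ₂ m) ∧
    (∀ δ : ℝ, δ ∈ Set.Ioo (0 : ℝ) 1 → ∀ m : ℕ, 2 ≤ m →
      γ * δ ^ (γ / 2) < sigma γ δ m ∧ sigma γ δ m < γ) ∧
    (∀ δ : ℝ, δ ∈ Set.Ioo (0 : ℝ) 1 →
      Tendsto (fun m : ℕ => sigma γ δ m) atTop (𝓝 (γ * δ ^ (γ / 2)))) ∧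
    (∀ m : ℕ, 2 ≤ m → Tendsto (fun δ : ℝ => sigma γ δ m) (𝓝[<] (1 : ℝ)) (𝓝 γ)) := by
  refine ⟨fun δ hδ m₁ m₂ hm₁ h ↦ sigma_lt_sigma_of_nat_lt hγ hδ (by omega) h,
    fun δ₁ δ₂ hδ₁ hδ₂ h m hm ↦ sigma_lt_sigma_of_lt hγ hδ₁ hδ₂ h (by omega),
    fun δ hδ m hm ↦ ⟨mul_rpow_half_lt_sigma hγ hδ (by omega), sigma_lt hγ hδ (by omega)⟩,
    fun δ hδ ↦ tendsto_sigma_atTop hγ hδ,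
    fun m hm ↦ tendsto_sigma_nhdsLT_one hγ (by omega)⟩

end GeomRecords
end
end

section
/- Let {E_n}_{n∈ℕ} be a sequence of i.i.d. random variables following an exponential distribution with rate λ > 0, let {x} denote the fractional part of a real number x, and let {a_n}_{n∈ℕ} be a sequence of positive real numbers with a_n → ∞. Then, almost surely, liminf_{n→∞} a_n·{E_n} equals either 0 or ∞ (a constant); moreover liminf_{n→∞} a_n·{E_n} = 0 almost surely if and only if Σ_{n=1}^∞ 1/a_n = ∞ (and liminf_{n→∞} a_n·{E_n} = ∞ almost surely if Σ_{n=1}^∞ 1/a_n < ∞). -/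
open MeasureTheory ProbabilityTheory Filter Set Asymptotics
open scoped ENNReal NNReal Topology Classical

noncomputable section

namespace GeomRecords

variable {Ω : Type*} [MeasurableSpace Ω]

/-!
For `0 ≤ ε ≤ 1`, summing the exponential law over the intervals `[k, k + ε)` gives
`P({E} < ε) = (1 - e^{-λε}) / (1 - e^{-λ})`, which lies between `ε` and `λε / (1 - e^{-λ})`.
Hence, for each `c > 0`, the events `{a n · {E n} < c}` have summable probabilities exactly when
`∑ 1 / a n < ∞`. The first Borel–Cantelli lemma then gives `a n · {E n} ≥ c` eventually, and the
second (this is where independence enters) gives `a n · {E n} < c` infinitely often, almost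
surely. Letting `c` run through a countable set yields `liminf = ∞`, resp. `liminf = 0`.
-/

lemma mul_one_sub_exp_neg_le {lam t : ℝ} (ht0 : 0 ≤ t) (ht1 : t ≤ 1) :
    t * (1 - Real.exp (-lam)) ≤ 1 - Real.exp (-lam * t) := by
  have := convexOn_exp.2 (mem_univ 0) (mem_univ (-lam)) (sub_nonneg.2 ht1) ht0 (by ring)
  simp only [smul_eq_mul, mul_zero, zero_add, Real.exp_zero, mul_one] at this
  rw [mul_comm] at this
  linarith

lemma fract_lt_iff_exists_mem_Ico {x ε : ℝ} (hx : 0 ≤ x) (hε : ε ≤ 1) :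
    Int.fract x < ε ↔ ∃ k : ℕ, x ∈ Ico (k : ℝ) (k + ε) := by
  constructor
  · intro h
    refine ⟨⌊x⌋₊, Nat.floor_le hx, ?_⟩
    rw [natCast_floor_eq_intCast_floor hx]
    linarith [Int.floor_add_fract x]
  · rintro ⟨k, hk, hkε⟩
    have hfloor : ⌊x⌋ = k := Int.floor_eq_iff.2 ⟨mod_cast hk, by push_cast; linarith⟩
    rw [Int.fract, hfloor]
    push_cast
    linarith

lemma pairwise_disjoint_Ico_natCast_add {ε : ℝ} (hε : ε ≤ 1) :
    Pairwise (Function.onFun Disjoint fun k : ℕ => Ico (k : ℝ) (k + ε)) := by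
  intro k l hkl
  refine Set.disjoint_left.2 fun x hk hl => hkl ?_
  have floor_eq {m : ℕ} (hm : x ∈ Ico (m : ℝ) (m + ε)) : ⌊x⌋₊ = m :=
    Nat.floor_eq_on_Ico m x ⟨hm.1, hm.2.trans_le (by linarith)⟩
  rw [← floor_eq hk, floor_eq hl]

lemma summable_min_div_one_iff {a : ℕ → ℝ} (ha : ∀ n, 0 < a n) {c : ℝ} (hc : 0 < c) :
    Summable (fun n => min (c / a n) 1) ↔ Summable fun n => 1 / a n := by
  have hscale : Summable (fun n => c / a n) ↔ Summable fun n => 1 / a n := by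
    simp_rw [div_eq_mul_one_div c]
    exact summable_mul_left_iff hc.ne'
  rw [← hscale]
  constructor
  · intro h
    refine (summable_congr_atTop ?_).1 h
    filter_upwards [h.tendsto_atTop_zero.eventually (gt_mem_nhds one_pos)] with n hn
    exact min_eq_left ((min_lt_iff.1 hn).resolve_right (lt_irrefl 1)).le
  · intro h
    exact h.of_nonneg_of_le (fun n => le_min (div_pos hc (ha n)).le zero_le_one)
      fun n => min_le_left _ _

lemma liminf_ofReal_eq_top {ι : Type*} {l : Filter ι} {u : ι → ℝ}
    (h : ∀ c : ℕ, ∀ᶠ i in l, (c : ℝ) ≤ u i) :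
    liminf (fun i => ENNReal.ofReal (u i)) l = ∞ := by
  refine ENNReal.eq_top_of_forall_nnreal_le fun r => ?_
  calc (r : ℝ≥0∞) ≤ (⌈r⌉₊ : ℝ≥0∞) := by exact_mod_cast Nat.le_ceil r
    _ = ENNReal.ofReal ⌈r⌉₊ := (ENNReal.ofReal_natCast _).symm
    _ ≤ liminf (fun i => ENNReal.ofReal (u i)) l :=
      le_liminf_of_le (by isBoundedDefault) ((h _).mono fun i hi => ENNReal.ofReal_le_ofReal hi)

lemma liminf_ofReal_eq_zero {ι : Type*} {l : Filter ι} {u : ι → ℝ}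
    (h : ∀ m : ℕ, ∃ᶠ i in l, u i < 1 / (m + 1)) :
    liminf (fun i => ENNReal.ofReal (u i)) l = 0 := by
  have hlim : Tendsto (fun m : ℕ => ENNReal.ofReal (1 / (m + 1))) atTop (𝓝 0) := by
    simpa using ENNReal.tendsto_ofReal tendsto_one_div_add_atTop_nhds_zero_nat
  refine le_antisymm (ge_of_tendsto' hlim fun m => ?_) bot_le
  exact liminf_le_of_frequently_le' ((h m).mono fun i hi => ENNReal.ofReal_le_ofReal hi.le)

theorem _root_.ProbabilityTheory.iIndepFun.iIndepSet_preimage {ι β : Type*}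
    [MeasurableSpace β] {f : ι → Ω → β} {μ : Measure Ω} (h : iIndepFun f μ)
    (hf : ∀ i, Measurable (f i)) {A : ι → Set β} (hA : ∀ i, MeasurableSet (A i)) :
    iIndepSet (fun i => f i ⁻¹' A i) μ := by
  rw [iIndepSet_iff_meas_biInter fun i => hf i (hA i)]
  exact fun S => h.measure_inter_preimage_eq_mul S fun i _ => hA i

section ExponentialFract

variable {μ : Measure Ω} [IsProbabilityMeasure μ] {X : Ω → ℝ} {lam : ℝ}

lemma measure_le_eq_exp
    (hsurv : ∀ x : ℝ, 0 ≤ x → μ {ω | x < X ω} = ENNReal.ofReal (Real.exp (-lam * x)))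
    {x : ℝ} (hx : 0 ≤ x) : μ {ω | x ≤ X ω} = ENNReal.ofReal (Real.exp (-lam * x)) := by
  refine le_antisymm ?_ ((hsurv x hx).symm.trans_le (measure_mono fun ω (h : x < X ω) => h.le))
  rcases hx.eq_or_lt with rfl | hx
  · simpa using prob_le_one
  · have hcont : Tendsto (fun y => ENNReal.ofReal (Real.exp (-lam * y))) (𝓝[<] x)
        (𝓝 (ENNReal.ofReal (Real.exp (-lam * x)))) := by
      refine ((ENNReal.continuous_ofReal.comp ?_).tendsto x).mono_left nhdsWithin_le_nhds
      fun_prop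
    refine ge_of_tendsto hcont ?_
    filter_upwards [Ioo_mem_nhdsLT hx] with y hy
    rw [← hsurv y hy.1.le]
    exact measure_mono fun ω h => hy.2.trans_le h

lemma measure_preimage_Ico_eq_exp_sub_exp (hX : Measurable X)
    (hsurv : ∀ x : ℝ, 0 ≤ x → μ {ω | x < X ω} = ENNReal.ofReal (Real.exp (-lam * x)))
    {x y : ℝ} (hx : 0 ≤ x) (hxy : x ≤ y) :
    μ (X ⁻¹' Ico x y) = ENNReal.ofReal (Real.exp (-lam * x) - Real.exp (-lam * y)) := by
  have hdiff : X ⁻¹' Ico x y = {ω | x ≤ X ω} \ {ω | y ≤ X ω} := by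
    ext ω; simp
  have hsub : {ω | y ≤ X ω} ⊆ {ω | x ≤ X ω} := fun ω h => hxy.trans h
  rw [hdiff, measure_sdiff hsub
      (measurableSet_le measurable_const hX).nullMeasurableSet (measure_ne_top _ _),
    measure_le_eq_exp hsurv hx, measure_le_eq_exp hsurv (hx.trans hxy),
    ENNReal.ofReal_sub _ (Real.exp_nonneg _)]

theorem measure_fract_lt_eq (hlam : 0 < lam) (hX : Measurable X)
    (hsurv : ∀ x : ℝ, 0 ≤ x → μ {ω | x < X ω} = ENNReal.ofReal (Real.exp (-lam * x)))
    {ε : ℝ} (hε0 : 0 ≤ ε) (hε1 : ε ≤ 1) :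
    μ {ω | Int.fract (X ω) < ε} =
      ENNReal.ofReal ((1 - Real.exp (-lam * ε)) / (1 - Real.exp (-lam))) := by
  have hnonneg : μ {ω | 0 ≤ X ω}ᶜ = 0 := by
    rw [prob_compl_eq_zero_iff (measurableSet_le measurable_const hX),
      measure_le_eq_exp hsurv le_rfl, mul_zero, Real.exp_zero, ENNReal.ofReal_one]
  have hunion :
      {ω | Int.fract (X ω) < ε} ∩ {ω | 0 ≤ X ω} = ⋃ k : ℕ, X ⁻¹' Ico (k : ℝ) (k + ε) := by
    ext ω
    simp only [mem_inter_iff, mem_ofPred_eq, mem_iUnion, mem_preimage]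
    constructor
    · rintro ⟨hfract, hω⟩
      exact (fract_lt_iff_exists_mem_Ico hω hε1).1 hfract
    · rintro ⟨k, hk⟩
      have hω : 0 ≤ X ω := k.cast_nonneg.trans hk.1
      exact ⟨(fract_lt_iff_exists_mem_Ico hω hε1).2 ⟨k, hk⟩, hω⟩
  have hr : Real.exp (-lam) < 1 := Real.exp_lt_one_iff.2 (neg_lt_zero.2 hlam)
  calc μ {ω | Int.fract (X ω) < ε}
      = μ (⋃ k : ℕ, X ⁻¹' Ico (k : ℝ) (k + ε)) := by rw [← hunion, measure_inter_conull hnonneg]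
    _ = ∑' k : ℕ, μ (X ⁻¹' Ico (k : ℝ) (k + ε)) :=
      measure_iUnion ((pairwise_disjoint_Ico_natCast_add hε1).mono fun _ _ h => h.preimage X)
        fun _ => hX measurableSet_Ico
    _ = ∑' k : ℕ, ENNReal.ofReal ((1 - Real.exp (-lam * ε)) * Real.exp (-lam) ^ k) := by
      congr 1; funext k
      rw [measure_preimage_Ico_eq_exp_sub_exp hX hsurv k.cast_nonneg (by linarith),
        ← Real.exp_nat_mul, sub_mul, one_mul, ← Real.exp_add]
      ring_nf
    _ = ENNReal.ofReal ((1 - Real.exp (-lam * ε)) / (1 - Real.exp (-lam))) := by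
      rw [← ENNReal.ofReal_tsum_of_nonneg, tsum_mul_left, tsum_geometric_of_lt_one
        (Real.exp_nonneg _) hr, div_eq_mul_inv]
      · intro k
        have : Real.exp (-lam * ε) ≤ 1 := Real.exp_le_one_iff.2 (by nlinarith)
        positivity
      · exact (summable_geometric_of_lt_one (Real.exp_nonneg _) hr).mul_left _

lemma ofReal_le_measure_fract_lt (hlam : 0 < lam) (hX : Measurable X)
    (hsurv : ∀ x : ℝ, 0 ≤ x → μ {ω | x < X ω} = ENNReal.ofReal (Real.exp (-lam * x)))
    {ε : ℝ} (hε0 : 0 ≤ ε) (hε1 : ε ≤ 1) :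
    ENNReal.ofReal ε ≤ μ {ω | Int.fract (X ω) < ε} := by
  rw [measure_fract_lt_eq hlam hX hsurv hε0 hε1]
  refine ENNReal.ofReal_le_ofReal ((le_div_iff₀ ?_).2 (mul_one_sub_exp_neg_le hε0 hε1))
  linarith [Real.exp_lt_one_iff.2 (neg_lt_zero.2 hlam)]

lemma measure_fract_lt_le (hlam : 0 < lam) (hX : Measurable X)
    (hsurv : ∀ x : ℝ, 0 ≤ x → μ {ω | x < X ω} = ENNReal.ofReal (Real.exp (-lam * x)))
    {ε : ℝ} (hε0 : 0 ≤ ε) (hε1 : ε ≤ 1) :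
    μ {ω | Int.fract (X ω) < ε} ≤ ENNReal.ofReal (lam / (1 - Real.exp (-lam)) * ε) := by
  rw [measure_fract_lt_eq hlam hX hsurv hε0 hε1, div_mul_eq_mul_div]
  refine ENNReal.ofReal_le_ofReal (div_le_div_of_nonneg_right ?_ ?_)
  · have := Real.one_sub_le_exp_neg (lam * ε)
    rw [← neg_mul] at this
    linarith
  · linarith [Real.exp_lt_one_iff.2 (neg_lt_zero.2 hlam)]

end ExponentialFract

section BorelCantelli

variable {μ : Measure Ω} [IsProbabilityMeasure μ] {E : ℕ → Ω → ℝ} {lam : ℝ} {a : ℕ → ℝ}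

theorem tsum_measure_fract_lt_ne_top_iff (hlam : 0 < lam) (hmeas : ∀ n, Measurable (E n))
    (hexp : ∀ n, ∀ x : ℝ, 0 ≤ x → μ {ω | x < E n ω} = ENNReal.ofReal (Real.exp (-lam * x)))
    {ε : ℕ → ℝ} (hε0 : ∀ n, 0 ≤ ε n) (hε1 : ∀ n, ε n ≤ 1) :
    ∑' n, μ {ω | Int.fract (E n ω) < ε n} ≠ ∞ ↔ Summable ε := by
  constructor
  · intro h
    refine (ENNReal.summable_toReal h).of_nonneg_of_le hε0 fun n => ?_
    exact (ENNReal.ofReal_le_iff_le_toReal (measure_ne_top _ _)).1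
      (ofReal_le_measure_fract_lt hlam (hmeas n) (hexp n) (hε0 n) (hε1 n))
  · intro h
    refine ne_top_of_le_ne_top (h.mul_left (lam / (1 - Real.exp (-lam)))).tsum_ofReal_ne_top
      (ENNReal.tsum_le_tsum fun n => ?_)
    exact measure_fract_lt_le hlam (hmeas n) (hexp n) (hε0 n) (hε1 n)

/-- The threshold `c / a n` is capped at `1` so that `measure_fract_lt_eq` applies; the cap is
eventually inactive whenever either side holds. -/
theorem tsum_measure_fract_lt_min_ne_top_iff (hlam : 0 < lam) (hmeas : ∀ n, Measurable (E n))
    (hexp : ∀ n, ∀ x : ℝ, 0 ≤ x → μ {ω | x < E n ω} = ENNReal.ofReal (Real.exp (-lam * x)))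
    (ha : ∀ n, 0 < a n) {c : ℝ} (hc : 0 < c) :
    ∑' n, μ {ω | Int.fract (E n ω) < min (c / a n) 1} ≠ ∞ ↔ Summable fun n => 1 / a n :=
  (tsum_measure_fract_lt_ne_top_iff hlam hmeas hexp
    (fun n => le_min (div_pos hc (ha n)).le zero_le_one) fun _ => min_le_right _ _).trans
    (summable_min_div_one_iff ha hc)

lemma ae_eventually_le_mul_fract (hlam : 0 < lam) (hmeas : ∀ n, Measurable (E n))
    (hexp : ∀ n, ∀ x : ℝ, 0 ≤ x → μ {ω | x < E n ω} = ENNReal.ofReal (Real.exp (-lam * x)))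
    (ha : ∀ n, 0 < a n) (hsum : Summable fun n => 1 / a n) {c : ℝ} (hc : 0 < c) :
    ∀ᵐ ω ∂μ, ∀ᶠ n in atTop, c ≤ a n * Int.fract (E n ω) := by
  have hrare := (tsum_measure_fract_lt_min_ne_top_iff hlam hmeas hexp ha hc).2 hsum
  have hcap : ∀ᶠ n in atTop, min (c / a n) 1 = c / a n := by
    filter_upwards [(hsum.mul_left c).tendsto_atTop_zero.eventually (ge_mem_nhds one_pos)]
      with n hn
    exact min_eq_left ((mul_one_div c (a n)) ▸ hn)
  filter_upwards [ae_eventually_notMem hrare] with ω hω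
  filter_upwards [hω, hcap] with n hn hcap_n
  rw [not_lt, hcap_n, div_le_iff₀ (ha n)] at hn
  linarith

lemma ae_frequently_mul_fract_lt (hlam : 0 < lam) (hmeas : ∀ n, Measurable (E n))
    (hindep : iIndepFun E μ)
    (hexp : ∀ n, ∀ x : ℝ, 0 ≤ x → μ {ω | x < E n ω} = ENNReal.ofReal (Real.exp (-lam * x)))
    (ha : ∀ n, 0 < a n) (hns : ¬Summable fun n => 1 / a n) {c : ℝ} (hc : 0 < c) :
    ∀ᵐ ω ∂μ, ∃ᶠ n in atTop, a n * Int.fract (E n ω) < c := by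
  set s : ℕ → Set Ω := fun n => E n ⁻¹' {x | Int.fract x < min (c / a n) 1}
  have hA : ∀ n, MeasurableSet {x : ℝ | Int.fract x < min (c / a n) 1} :=
    fun n => measurableSet_lt measurable_fract measurable_const
  have hs : ∀ n, MeasurableSet (s n) := fun n => hmeas n (hA n)
  have hfrequent : ∑' n, μ (s n) = ∞ := by
    by_contra h
    exact hns ((tsum_measure_fract_lt_min_ne_top_iff hlam hmeas hexp ha hc).1 h)
  have hlimsup : limsup s atTop ∈ ae μ :=
    mem_ae_iff.2 ((prob_compl_eq_zero_iff (.measurableSet_limsup hs)).2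
      (measure_limsup_eq_one hs (hindep.iIndepSet_preimage hmeas hA) hfrequent))
  filter_upwards [hlimsup] with ω hω
  refine (mem_limsup_iff_frequently_mem.1 hω).mono
    fun n (hn : Int.fract (E n ω) < min (c / a n) 1) => ?_
  rw [← lt_div_iff₀' (ha n)]
  exact hn.trans_le (min_le_left _ _)

theorem ae_liminf_mul_fract_eq_top (hlam : 0 < lam) (hmeas : ∀ n, Measurable (E n))
    (hexp : ∀ n, ∀ x : ℝ, 0 ≤ x → μ {ω | x < E n ω} = ENNReal.ofReal (Real.exp (-lam * x)))
    (ha : ∀ n, 0 < a n) (hsum : Summable fun n => 1 / a n) :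
    ∀ᵐ ω ∂μ, liminf (fun n => ENNReal.ofReal (a n * Int.fract (E n ω))) atTop = ∞ := by
  filter_upwards [ae_all_iff.2 fun c : ℕ =>
    ae_eventually_le_mul_fract hlam hmeas hexp ha hsum c.cast_add_one_pos] with ω hω
  exact liminf_ofReal_eq_top fun c => (hω c).mono fun n hn => by linarith

theorem ae_liminf_mul_fract_eq_zero (hlam : 0 < lam) (hmeas : ∀ n, Measurable (E n))
    (hindep : iIndepFun E μ)
    (hexp : ∀ n, ∀ x : ℝ, 0 ≤ x → μ {ω | x < E n ω} = ENNReal.ofReal (Real.exp (-lam * x)))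
    (ha : ∀ n, 0 < a n) (hns : ¬Summable fun n => 1 / a n) :
    ∀ᵐ ω ∂μ, liminf (fun n => ENNReal.ofReal (a n * Int.fract (E n ω))) atTop = 0 := by
  filter_upwards [ae_all_iff.2 fun m : ℕ =>
    ae_frequently_mul_fract_lt hlam hmeas hindep hexp ha hns (c := 1 / (m + 1)) (by positivity)]
    with ω hω
  exact liminf_ofReal_eq_zero hω

end BorelCantelli

theorem liminf_fract_exponential_general
    (μ : Measure Ω) [IsProbabilityMeasure μ] (E : ℕ → Ω → ℝ) (lam : ℝ)
    (hlam : 0 < lam)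
    (hmeas : ∀ n, Measurable (E n))
    (hindep : iIndepFun E μ)
    (hexp : ∀ n, ∀ x : ℝ, 0 ≤ x → μ {ω | x < E n ω} = ENNReal.ofReal (Real.exp (-lam * x)))
    (a : ℕ → ℝ) (ha : ∀ n, 0 < a n) :
    ((∀ᵐ ω ∂μ,
        liminf (fun n : ℕ => ENNReal.ofReal (a n * Int.fract (E n ω))) atTop = 0) ∨
      (∀ᵐ ω ∂μ,
        liminf (fun n : ℕ => ENNReal.ofReal (a n * Int.fract (E n ω))) atTop = ⊤)) ∧
    ((∀ᵐ ω ∂μ,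
        liminf (fun n : ℕ => ENNReal.ofReal (a n * Int.fract (E n ω))) atTop = 0) ↔
      ¬ Summable fun n : ℕ => 1 / a n) ∧
    (Summable (fun n : ℕ => 1 / a n) →
      ∀ᵐ ω ∂μ,
        liminf (fun n : ℕ => ENNReal.ofReal (a n * Int.fract (E n ω))) atTop = ⊤) := by
  have hzero := fun hns => ae_liminf_mul_fract_eq_zero hlam hmeas hindep hexp ha hns
  have htop := fun hsum => ae_liminf_mul_fract_eq_top (μ := μ) hlam hmeas hexp ha hsum
  refine ⟨?_, ⟨fun h0 hsum => ?_, hzero⟩, htop⟩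
  · by_cases hsum : Summable fun n => 1 / a n
    · exact Or.inr (htop hsum)
    · exact Or.inl (hzero hsum)
  · obtain ⟨ω, hω0, hωtop⟩ := (h0.and (htop hsum)).exists
    exact ENNReal.zero_ne_top (hω0.symm.trans hωtop)

/-- For i.i.d. exponential variables `E n` with rate `λ > 0` and
positive constants `a n → ∞`, the liminf of `a n · {E n}` is almost surely a constant
equal to `0` or `∞`; it is `0` a.s. iff `Σ 1/a n = ∞`, and it is `∞` a.s. if
`Σ 1/a n < ∞`. -/
theorem liminf_fract_exponential
    (μ : Measure Ω) [IsProbabilityMeasure μ] (E : ℕ → Ω → ℝ) (lam : ℝ)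
    (hlam : 0 < lam)
    (hmeas : ∀ n, Measurable (E n))
    (hindep : iIndepFun E μ)
    (hexp : ∀ n, ∀ x : ℝ, 0 ≤ x → μ {ω | x < E n ω} = ENNReal.ofReal (Real.exp (-lam * x)))
    (a : ℕ → ℝ) (ha : ∀ n, 0 < a n) (hatop : Tendsto a atTop atTop) :
    ((∀ᵐ ω ∂μ,
        liminf (fun n : ℕ => ENNReal.ofReal (a n * Int.fract (E n ω))) atTop = 0) ∨
      (∀ᵐ ω ∂μ,
        liminf (fun n : ℕ => ENNReal.ofReal (a n * Int.fract (E n ω))) atTop = ⊤)) ∧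
    ((∀ᵐ ω ∂μ,
        liminf (fun n : ℕ => ENNReal.ofReal (a n * Int.fract (E n ω))) atTop = 0) ↔
      ¬ Summable fun n : ℕ => 1 / a n) ∧
    (Summable (fun n : ℕ => 1 / a n) →
      ∀ᵐ ω ∂μ,
        liminf (fun n : ℕ => ENNReal.ofReal (a n * Int.fract (E n ω))) atTop = ⊤) :=
  liminf_fract_exponential_general μ E lam hlam hmeas hindep hexp a ha

end GeomRecords
end
end
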